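/- arXiv:hep-th/0202080 — 2 statements merged into one kernel-verified Lean document; each statement's English description precedes it below -/
import Mathlib

section
/- Let $K$ and $J_i, J_{i+1}$ be elements of an associative ring with $K^2=1$ satisfying $K J_i = J_{i+1} K - 2a$ and $K J_{i+1} = J_i K + 2a$ (where $a$ is a central element), and $[J_i, J_{i+1}] = 0$. Then $K(J_i^{2p} + J_{i+1}^{2p}) = (J_i^{2p} + J_{i+1}^{2p})K$ for every $p \in \mathbb{N}$; indeed $K J_i^{2p} = J_{i+1}^{2p}K - 2a\sum_{r=0}^{2p-1} J_i^{2p-r-1} J_{i+1}^{r}$ and $K J_{i+1}^{2p} = J_i^{2p}K + 2a\sum_{r=0}^{2p-1} J_i^{2p-r-1} J_{i+1}^{r}$ (with products reordered using commutativity of $J_i, J_{i+1}$). -/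
open Finset

/-- Lemma 2.4 of the paper: exchange relations of commuting Dunkl-type operators
`Jᵢ, Jᵢ₊₁` with an elementary transposition `K`: for every `p`,
`K Jᵢ^{2p} = Jᵢ₊₁^{2p} K - 2a ∑_{r=0}^{2p-1} Jᵢ^{2p-r-1} Jᵢ₊₁^r`,
`K Jᵢ₊₁^{2p} = Jᵢ^{2p} K + 2a ∑_{r=0}^{2p-1} Jᵢ^{2p-r-1} Jᵢ₊₁^r`,
and consequently `K` commutes with `Jᵢ^{2p} + Jᵢ₊₁^{2p}`. -/
theorem dunkl_exchange_even_powers {R : Type*} [Ring R]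
    (K Ji Jj a : R) (ha : ∀ x : R, a * x = x * a)
    (hK : K * K = 1) (hcomm : Ji * Jj = Jj * Ji)
    (h1 : K * Ji = Jj * K - 2 * a)
    (h2 : K * Jj = Ji * K + 2 * a) :
    ∀ p : ℕ,
      K * Ji ^ (2 * p) =
        Jj ^ (2 * p) * K - 2 * a * ∑ r ∈ range (2 * p), Ji ^ (2 * p - r - 1) * Jj ^ r ∧
      K * Jj ^ (2 * p) =
        Ji ^ (2 * p) * K + 2 * a * ∑ r ∈ range (2 * p), Ji ^ (2 * p - r - 1) * Jj ^ r ∧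
      K * (Ji ^ (2 * p) + Jj ^ (2 * p)) = (Ji ^ (2 * p) + Jj ^ (2 * p)) * K := by
  have h2a : ∀ x : R, 2 * a * x = x * (2 * a) := by
    intro x
    rw [two_mul, add_mul, mul_add, ha]
  have hC : Commute Ji Jj := hcomm
  suffices h : ∀ n : ℕ,
      K * Ji ^ n = Jj ^ n * K - 2 * a * ∑ r ∈ range n, Ji ^ (n - r - 1) * Jj ^ r ∧
      K * Jj ^ n = Ji ^ n * K + 2 * a * ∑ r ∈ range n, Ji ^ (n - r - 1) * Jj ^ r by
    intro p
    obtain ⟨hA, hB⟩ := h (2 * p)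
    refine ⟨hA, hB, ?_⟩
    rw [mul_add, hA, hB, add_mul]
    abel
  intro n
  induction n with
  | zero => simp
  | succ n ih =>
    obtain ⟨ihA, ihB⟩ := ih
    set S : R := ∑ r ∈ range n, Ji ^ (n - r - 1) * Jj ^ r with hS
    have hsumA : ∑ r ∈ range (n + 1), Ji ^ (n + 1 - r - 1) * Jj ^ r = S * Ji + Jj ^ n := by
      rw [Finset.sum_range_succ, hS, Finset.sum_mul]
      congr 1
      · refine Finset.sum_congr rfl fun r hr => ?_
        have hr' : r < n := Finset.mem_range.mp hr
        have : Jj ^ r * Ji = Ji * Jj ^ r := ((hC.symm.pow_left r)).eq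
        rw [mul_assoc, this, ← mul_assoc, ← pow_succ]
        congr 2
        omega
      · simp
    have hsumB : ∑ r ∈ range (n + 1), Ji ^ (n + 1 - r - 1) * Jj ^ r = Ji ^ n + S * Jj := by
      rw [Finset.sum_range_succ', hS, Finset.sum_mul]
      have e0 : Ji ^ (n + 1 - 0 - 1) * Jj ^ 0 = Ji ^ n := by simp
      rw [e0, add_comm]
      congr 1
      refine Finset.sum_congr rfl fun r hr => ?_
      rw [mul_assoc, ← pow_succ]
      congr 2
      omega
    constructor
    · rw [hsumA, pow_succ, ← mul_assoc, ihA, sub_mul, mul_assoc (Jj ^ n) K Ji, h1, pow_succ,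
        mul_sub, ← h2a, mul_assoc (2 * a) S Ji, mul_add (2 * a), ← mul_assoc (Jj ^ n) Jj K]
      abel
    · rw [hsumB, pow_succ, ← mul_assoc, ihB, add_mul, mul_assoc (Ji ^ n) K Jj, h2, pow_succ,
        mul_add (Ji ^ n), ← h2a, mul_assoc (2 * a) S Jj, mul_add (2 * a), ← mul_assoc (Ji ^ n) Ji K]
      abel
end

section
/- Let $n \in \mathbb{Z}^N$ be nonnegative and nonincreasing ($n_1 \ge n_2 \ge \dots \ge n_N \ge 0$), and suppose for indices $j < i$ with $n_j > n_i$ and $1 \le r \le n_j - n_i - 1$ we form $n' = (n_1,\dots,n_j - r,\dots,n_i + r,\dots,n_N)$. Then $[n'] \prec [n]$ in the order where $\prec$ compares the nonincreasing rearrangements of absolute values lexicographically. -/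
/-!
Away from the entries `i` and `j`, the multisets of absolute values of `n'` and `n` agree. Both
new values `n i + r` and `n j - r` lie strictly below `n j`, the larger of the two old ones. So
the two sorted lists have the same entries above `n j`, and `[n]` has one more entry equal to
`n j`: the first position where they differ holds `n j` in `[n]` and something smaller in `[n']`.
-/

/-- `[n]`: the nonincreasing rearrangement of the absolute values of the entries. -/
def bracket {N : ℕ} (n : Fin N → ℤ) : List ℤ :=
  (Multiset.map (fun i => |n i|) Finset.univ.val).sort (· ≥ ·)

/-- The partial order `≺` of the paper: `n ≺ n'` iff `[n] <_lex [n']`. -/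
def prec {N : ℕ} (n n' : Fin N → ℤ) : Prop :=
  List.Lex (· < ·) (bracket n) (bracket n')

namespace List

variable {α : Type*} [LinearOrder α]

theorem countP_le_eq_zero_of_pairwise_ge {a w : α} {L : List α}
    (hL : (a :: L).Pairwise (· ≥ ·)) (haw : a < w) : (a :: L).countP (w ≤ ·) = 0 := by
  refine countP_eq_zero.2 fun b hb => ?_
  rcases mem_cons.1 hb with rfl | hb
  · simpa using haw
  · simpa using ((pairwise_cons.1 hL).1 b hb).trans_lt haw

theorem lex_lt_of_countP_le_lt {L' L : List α} (hL' : L'.Pairwise (· ≥ ·))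
    (hL : L.Pairwise (· ≥ ·)) (v : α)
    (habove : ∀ w, v < w → L'.countP (w ≤ ·) = L.countP (w ≤ ·))
    (hat : L'.countP (v ≤ ·) < L.countP (v ≤ ·)) : Lex (· < ·) L' L := by
  induction L generalizing L' with
  | nil => simp at hat
  | cons a L ih =>
    rcases L' with _ | ⟨a', L'⟩
    · exact Lex.nil
    rcases lt_trichotomy a' a with hlt | rfl | hgt
    · exact Lex.rel hlt
    · rcases le_or_gt v a' with hva | hav
      · refine Lex.cons (ih hL'.of_cons hL.of_cons (fun w hw => ?_) ?_)
        · have := habove w hw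
          simp only [countP_cons] at this
          omega
        · simp only [countP_cons, hva, decide_true, if_true] at hat
          omega
      · have := countP_le_eq_zero_of_pairwise_ge hL hav
        omega
    · rcases le_or_gt a' v with hav | hva
      · have := countP_le_eq_zero_of_pairwise_ge hL (hgt.trans_le hav)
        omega
      · have h := habove a' hva
        rw [countP_le_eq_zero_of_pairwise_ge hL hgt, countP_cons] at h
        simp at h

end List

theorem Multiset.sort_ge_lex_add_of_forall_lt {α : Type*} [LinearOrder α] (s : Multiset α)
    {t u : Multiset α} {v : α} (ht : ∀ x ∈ t, x < v) (hu : ∀ x ∈ u, x ≤ v) (hv : v ∈ u) :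
    List.Lex (· < ·) ((t + s).sort (· ≥ ·)) ((u + s).sort (· ≥ ·)) := by
  refine List.lex_lt_of_countP_le_lt (pairwise_sort _ _) (pairwise_sort _ _) v
    (fun w hw => ?_) ?_
  all_goals simp only [← coe_countP, sort_eq, countP_add]
  · have ht0 : t.countP (w ≤ ·) = 0 :=
      countP_eq_zero.2 fun x hx => by simpa using (ht x hx).trans hw
    have hu0 : u.countP (w ≤ ·) = 0 :=
      countP_eq_zero.2 fun x hx => by simpa using (hu x hx).trans_lt hw
    rw [ht0, hu0]
  · rw [countP_eq_zero.2 fun x hx => by simpa using ht x hx]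
    have : 0 < u.countP (v ≤ ·) := countP_pos.2 ⟨v, hv, by simp⟩
    omega

theorem Finset.val_map_update {ι β γ : Type*} [DecidableEq ι] (f : ι → β) (g : β → γ)
    {s : Finset ι} {i : ι} (hi : i ∈ s) (b : β) :
    s.val.map (fun k => g (Function.update f i b k)) =
      g b ::ₘ (s.erase i).val.map fun k => g (f k) := by
  conv_lhs => rw [← Multiset.cons_erase hi]
  rw [Multiset.map_cons, Function.update_self, ← Finset.erase_val]
  congr 1
  exact Multiset.map_congr rfl fun k hk => by
    rw [Function.update_of_ne (Finset.ne_of_mem_erase hk)]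

theorem transfer_lowers_order_general (N : ℕ) (n : Fin N → ℤ)
    (hnonneg : ∀ i, 0 ≤ n i)
    (i j : Fin N) (hgt : n i < n j)
    (r : ℤ) (hr1 : 1 ≤ r) (hr2 : r ≤ n j - n i - 1) :
    prec (Function.update (Function.update n j (n j - r)) i (n i + r)) n := by
  have hj : j ∈ Finset.univ.erase i :=
    Finset.mem_erase.2 ⟨(ne_of_apply_ne n hgt.ne).symm, Finset.mem_univ j⟩
  set S := ((Finset.univ.erase i).erase j).val.map fun k => |n k|
  have hn' : Finset.univ.val.map (fun k => |Function.update (Function.update n j (n j - r)) i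
      (n i + r) k|) = {|n i + r|, |n j - r|} + S := by
    rw [Finset.val_map_update _ _ (Finset.mem_univ i), Finset.val_map_update _ _ hj]
    simp [S]
  have hn : Finset.univ.val.map (fun k => |n k|) = {|n i|, |n j|} + S := by
    have := Finset.val_map_update n abs (Finset.mem_univ i) (n i)
    rw [Function.update_eq_self, ← Function.update_eq_self j n,
      Finset.val_map_update _ _ hj] at this
    simpa [S] using this
  unfold prec bracket
  rw [hn', hn]
  have hni := hnonneg i
  rw [abs_of_nonneg hni, abs_of_nonneg (hnonneg j), abs_of_nonneg (show 0 ≤ n i + r by omega),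
    abs_of_nonneg (show 0 ≤ n j - r by omega)]
  refine Multiset.sort_ge_lex_add_of_forall_lt S (v := n j) ?_ ?_ (by simp)
  all_goals simp only [Multiset.insert_eq_cons, Multiset.mem_cons, Multiset.mem_singleton,
    forall_eq_or_imp, forall_eq]
  all_goals omega

/-- Key triangularity step: if `n` is nonnegative and nonincreasing, `j < i`,
`n j > n i`, and `1 ≤ r ≤ n j - n i - 1`, then the multiindex obtained from `n`
by replacing `n j ↦ n j - r` and `n i ↦ n i + r` is strictly lower than `n`
in the order `≺`. -/
theorem transfer_lowers_order (N : ℕ) (n : Fin N → ℤ)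
    (hnonneg : ∀ i, 0 ≤ n i)
    (hmono : ∀ i j : Fin N, i ≤ j → n j ≤ n i)
    (i j : Fin N) (hji : j < i) (hgt : n i < n j)
    (r : ℤ) (hr1 : 1 ≤ r) (hr2 : r ≤ n j - n i - 1) :
    prec (Function.update (Function.update n j (n j - r)) i (n i + r)) n :=
  transfer_lowers_order_general N n hnonneg i j hgt r hr1 hr2
end
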